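/- arXiv:2103.04455 — 7 statements merged into one kernel-verified Lean document; each statement's English description precedes it below -/
import Mathlib

section
/- A nonempty set S ⊆ S_Φ is s-convex if and only if there exists a pointed convex cone K ⊆ ℝⁿ with K ≠ {0} such that S = K ∩ S_Φ. -/
open Set
open scoped RealInnerProductSpace

/-- `rho Φ x = x / Φ x` (equal to `0` when `Φ x = 0`, in particular `rho Φ 0 = 0`). -/
noncomputable def rho {n : ℕ} (Φ : EuclideanSpace ℝ (Fin n) → ℝ)
    (x : EuclideanSpace ℝ (Fin n)) : EuclideanSpace ℝ (Fin n) := (Φ x)⁻¹ • x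

/-- The `Φ`-sphere `S_Φ = {x | Φ x = 1}`. -/
def sphereSet {n : ℕ} (Φ : EuclideanSpace ℝ (Fin n) → ℝ) : Set (EuclideanSpace ℝ (Fin n)) :=
  {x | Φ x = 1}

/-- `S` is s-convex: `ρ(λx + (1-λ)y) ∈ S` for all `x, y ∈ S`, `λ ∈ [0,1]`. -/
def SConvex {n : ℕ} (Φ : EuclideanSpace ℝ (Fin n) → ℝ)
    (S : Set (EuclideanSpace ℝ (Fin n))) : Prop :=
  ∀ x ∈ S, ∀ y ∈ S, ∀ l : ℝ, l ∈ Set.Icc (0 : ℝ) 1 → rho Φ (l • x + (1 - l) • y) ∈ S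


/-! The cone is `Ici 0 • S`, the set of nonnegative multiples of points of `S`. For `S` s-convex,
every segment between points of `S` misses `0` (since `ρ 0 = 0 ∉ S_Φ`) and is radially projected
back into `S`; the first fact makes the cone pointed, the second makes it convex, and
homogeneity of `Φ` cuts it back to `S` on `S_Φ`. Conversely, in a pointed convex cone a segment
between nonzero points misses `0`, so its points can be normalised by `ρ` without leaving the cone. -/

section RayCone

open scoped Pointwise

variable {E : Type*} [AddCommGroup E] [Module ℝ E] {S : Set E}

lemma exists_smul_add_smul_eq_smul_mem_segment {a b : ℝ} (ha : 0 ≤ a) (hb : 0 ≤ b)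
    (hab : 0 < a + b) (x y : E) : ∃ z ∈ segment ℝ x y, a • x + b • y = (a + b) • z := by
  refine ⟨(a / (a + b)) • x + (b / (a + b)) • y, mem_segment_iff_div.2 ⟨a, b, ha, hb, hab, rfl⟩, ?_⟩
  rw [smul_add, smul_smul, smul_smul, mul_div_cancel₀ _ hab.ne', mul_div_cancel₀ _ hab.ne']

lemma subset_Ici_smul : S ⊆ Ici (0 : ℝ) • S := fun x hx =>
  one_smul ℝ x ▸ smul_mem_smul (mem_Ici.2 zero_le_one) hx

lemma smul_mem_Ici_smul {c : ℝ} (hc : 0 ≤ c) {u : E} (hu : u ∈ Ici (0 : ℝ) • S) :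
    c • u ∈ Ici (0 : ℝ) • S := by
  obtain ⟨a, ha, x, hx, rfl⟩ := mem_smul.1 hu
  exact ⟨c * a, mul_nonneg hc ha, x, hx, mul_smul c a x⟩

lemma zero_mem_Ici_smul (hne : S.Nonempty) : (0 : E) ∈ Ici (0 : ℝ) • S := by
  obtain ⟨x, hx⟩ := hne
  simpa using smul_mem_Ici_smul le_rfl (subset_Ici_smul hx)

lemma add_mem_Ici_smul (hS : ∀ x ∈ S, ∀ y ∈ S, segment ℝ x y ⊆ Ici (0 : ℝ) • S) {u v : E}
    (hu : u ∈ Ici (0 : ℝ) • S) (hv : v ∈ Ici (0 : ℝ) • S) : u + v ∈ Ici (0 : ℝ) • S := by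
  obtain ⟨c, hc, x, hx, rfl⟩ := mem_smul.1 hu
  obtain ⟨d, hd, y, hy, rfl⟩ := mem_smul.1 hv
  rw [mem_Ici] at hc hd
  rcases (add_nonneg hc hd).eq_or_lt with hcd | hcd
  · obtain ⟨rfl, rfl⟩ := (add_eq_zero_iff_of_nonneg hc hd).1 hcd.symm
    simpa using zero_mem_Ici_smul ⟨x, hx⟩
  · obtain ⟨z, hz, hxyz⟩ := exists_smul_add_smul_eq_smul_mem_segment hc hd hcd x y
    exact hxyz ▸ smul_mem_Ici_smul hcd.le (hS x hx y hy hz)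

lemma convex_Ici_smul (hS : ∀ x ∈ S, ∀ y ∈ S, segment ℝ x y ⊆ Ici (0 : ℝ) • S) :
    Convex ℝ (Ici (0 : ℝ) • S) :=
  convex_iff_forall_pos.2 fun _ hu _ hv _ _ ha hb _ =>
    add_mem_Ici_smul hS (smul_mem_Ici_smul ha.le hu) (smul_mem_Ici_smul hb.le hv)

lemma Ici_smul_inter_neg (hS : ∀ x ∈ S, ∀ y ∈ S, (0 : E) ∉ segment ℝ x y) (hne : S.Nonempty) :
    Ici (0 : ℝ) • S ∩ -(Ici (0 : ℝ) • S) = {0} := by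
  refine subset_antisymm ?_ (by simpa using zero_mem_Ici_smul hne)
  rintro _ ⟨hu, hv⟩
  obtain ⟨c, hc, x, hx, rfl⟩ := mem_smul.1 hu
  obtain ⟨d, hd, y, hy, hneg⟩ := mem_smul.1 hv
  rw [mem_Ici] at hc hd
  have hsum : c • x + d • y = 0 := by rw [hneg, add_neg_cancel]
  rcases (add_nonneg hc hd).eq_or_lt with hcd | hcd
  · simp [((add_eq_zero_iff_of_nonneg hc hd).1 hcd.symm).1]
  · obtain ⟨z, hz, hxyz⟩ := exists_smul_add_smul_eq_smul_mem_segment hc hd hcd x y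
    rw [hsum, eq_comm, smul_eq_zero] at hxyz
    exact absurd (hxyz.resolve_left hcd.ne' ▸ hz) (hS x hx y hy)

lemma Ici_smul_ne_singleton_zero (hne : S.Nonempty) (h0 : (0 : E) ∉ S) :
    Ici (0 : ℝ) • S ≠ {0} := by
  obtain ⟨x, hx⟩ := hne
  intro h
  have hx0 : x = 0 := by simpa [h] using subset_Ici_smul hx
  exact h0 (hx0 ▸ hx)

lemma zero_notMem_segment_of_inter_neg_eq_singleton {K : Set E}
    (hcone : ∀ c : ℝ, 0 ≤ c → ∀ y ∈ K, c • y ∈ K) (hpt : K ∩ -K = {0})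
    {x y : E} (hx : x ∈ K) (hy : y ∈ K) (hx0 : x ≠ 0) (hy0 : y ≠ 0) :
    (0 : E) ∉ segment ℝ x y := by
  rintro ⟨a, b, ha, hb, hab, hxy⟩
  have hax : a • x ∈ K ∩ -K := by
    refine ⟨hcone a ha x hx, ?_⟩
    rw [mem_neg, neg_eq_of_add_eq_zero_right hxy]
    exact hcone b hb y hy
  rw [hpt, mem_singleton_iff, smul_eq_zero] at hax
  obtain rfl := hax.resolve_right hx0
  rw [zero_add] at hab
  simp [hab, hy0] at hxy

end RayCone

section PhiSphere

open scoped Pointwise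

variable {n : ℕ} {Φ : EuclideanSpace ℝ (Fin n) → ℝ}

lemma zero_notMem_sphereSet (hhom : ∀ (t : ℝ), 0 ≤ t → ∀ x, Φ (t • x) = t * Φ x) :
    (0 : EuclideanSpace ℝ (Fin n)) ∉ sphereSet Φ := by
  have : Φ 0 = 0 := by simpa using hhom 0 le_rfl 0
  simp [sphereSet, this]

lemma smul_rho (hpos : ∀ x, x ≠ 0 → 0 < Φ x) {x : EuclideanSpace ℝ (Fin n)} (hx : x ≠ 0) :
    Φ x • rho Φ x = x := by
  rw [rho, smul_smul, mul_inv_cancel₀ (hpos x hx).ne', one_smul]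

lemma rho_mem_sphereSet (hpos : ∀ x, x ≠ 0 → 0 < Φ x)
    (hhom : ∀ (t : ℝ), 0 ≤ t → ∀ x, Φ (t • x) = t * Φ x) {x : EuclideanSpace ℝ (Fin n)}
    (hx : x ≠ 0) : rho Φ x ∈ sphereSet Φ := by
  show Φ ((Φ x)⁻¹ • x) = 1
  rw [hhom _ (inv_nonneg.2 (hpos x hx).le), inv_mul_cancel₀ (hpos x hx).ne']

lemma Ici_smul_inter_sphereSet (hhom : ∀ (t : ℝ), 0 ≤ t → ∀ x, Φ (t • x) = t * Φ x)
    {S : Set (EuclideanSpace ℝ (Fin n))} (hsub : S ⊆ sphereSet Φ) :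
    Ici (0 : ℝ) • S ∩ sphereSet Φ = S := by
  refine subset_antisymm ?_ fun x hx => ⟨subset_Ici_smul hx, hsub hx⟩
  rintro _ ⟨hu, hcx⟩
  obtain ⟨c, hc, x, hx, rfl⟩ := mem_smul.1 hu
  have hc1 : c = 1 := by
    simpa [sphereSet, hhom c hc, show Φ x = 1 from hsub hx] using hcx
  rwa [hc1, one_smul]

variable {S : Set (EuclideanSpace ℝ (Fin n))}

lemma zero_notMem_segment_of_sConvex (hhom : ∀ (t : ℝ), 0 ≤ t → ∀ x, Φ (t • x) = t * Φ x)
    (hS : SConvex Φ S) (hsub : S ⊆ sphereSet Φ) {x y : EuclideanSpace ℝ (Fin n)}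
    (hx : x ∈ S) (hy : y ∈ S) : 0 ∉ segment ℝ x y := by
  rintro ⟨a, b, ha, hb, hab, hxy⟩
  have h := hsub (hS x hx y hy a ⟨ha, by linarith⟩)
  rw [← eq_sub_of_add_eq' hab, hxy, rho, smul_zero] at h
  exact zero_notMem_sphereSet hhom h

lemma segment_subset_Ici_smul_of_sConvex (hpos : ∀ x, x ≠ 0 → 0 < Φ x)
    (hhom : ∀ (t : ℝ), 0 ≤ t → ∀ x, Φ (t • x) = t * Φ x) (hS : SConvex Φ S)
    (hsub : S ⊆ sphereSet Φ) {x y : EuclideanSpace ℝ (Fin n)} (hx : x ∈ S) (hy : y ∈ S) :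
    segment ℝ x y ⊆ Ici (0 : ℝ) • S := by
  intro z hz
  have hz0 : z ≠ 0 := by
    rintro rfl
    exact zero_notMem_segment_of_sConvex hhom hS hsub hx hy hz
  obtain ⟨a, b, ha, hb, hab, rfl⟩ := hz
  rw [← smul_rho hpos hz0]
  refine smul_mem_smul (hpos _ hz0).le ?_
  simpa only [← eq_sub_of_add_eq' hab] using hS x hx y hy a ⟨ha, by linarith⟩

lemma sConvex_inter_sphereSet (hpos : ∀ x, x ≠ 0 → 0 < Φ x)
    (hhom : ∀ (t : ℝ), 0 ≤ t → ∀ x, Φ (t • x) = t * Φ x) {K : Set (EuclideanSpace ℝ (Fin n))}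
    (hconv : Convex ℝ K) (hcone : ∀ c : ℝ, 0 ≤ c → ∀ y ∈ K, c • y ∈ K) (hpt : K ∩ -K = {0}) :
    SConvex Φ (K ∩ sphereSet Φ) := by
  rintro x ⟨hxK, hxΦ⟩ y ⟨hyK, hyΦ⟩ l ⟨hl0, hl1⟩
  have hz0 : l • x + (1 - l) • y ≠ 0 := fun h =>
    zero_notMem_segment_of_inter_neg_eq_singleton hcone hpt hxK hyK
      (ne_of_mem_of_not_mem hxΦ (zero_notMem_sphereSet hhom))
      (ne_of_mem_of_not_mem hyΦ (zero_notMem_sphereSet hhom))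
      ⟨l, 1 - l, hl0, by linarith, by ring, h⟩
  exact ⟨hcone _ (inv_nonneg.2 (hpos _ hz0).le) _ (hconv hxK hyK hl0 (by linarith) (by ring)),
    rho_mem_sphereSet hpos hhom hz0⟩

end PhiSphere

theorem stmt2_general {n : ℕ} (Φ : EuclideanSpace ℝ (Fin n) → ℝ)
    (hnn : ∀ x, 0 ≤ Φ x)
    (hhom : ∀ (t : ℝ), 0 ≤ t → ∀ x, Φ (t • x) = t * Φ x)
    (hzero : ∀ x, Φ x = 0 ↔ x = 0)
    (S : Set (EuclideanSpace ℝ (Fin n))) (hne : S.Nonempty) (hsub : S ⊆ sphereSet Φ) :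
    SConvex Φ S ↔
      ∃ K : Set (EuclideanSpace ℝ (Fin n)),
        Convex ℝ K ∧ (∀ c : ℝ, 0 ≤ c → ∀ y ∈ K, c • y ∈ K) ∧ K ≠ {0} ∧
        K ∩ (-K) = {0} ∧ S = K ∩ sphereSet Φ := by
  have hpos : ∀ x, x ≠ 0 → 0 < Φ x := fun x hx => (hnn x).lt_of_ne' (mt (hzero x).1 hx)
  constructor
  · intro hS
    have hseg0 : ∀ x ∈ S, ∀ y ∈ S, (0 : EuclideanSpace ℝ (Fin n)) ∉ segment ℝ x y :=
      fun x hx y hy => zero_notMem_segment_of_sConvex hhom hS hsub hx hy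
    -- the witness is `Ici 0 • S`
    refine ⟨_,
      convex_Ici_smul fun x hx y hy => segment_subset_Ici_smul_of_sConvex hpos hhom hS hsub hx hy,
      fun c hc u hu => smul_mem_Ici_smul hc hu,
      Ici_smul_ne_singleton_zero hne fun h0 => hseg0 0 h0 0 h0 (left_mem_segment ℝ 0 0),
      Ici_smul_inter_neg hseg0 hne, (Ici_smul_inter_sphereSet hhom hsub).symm⟩
  · rintro ⟨K, hconv, hcone, -, hpt, rfl⟩
    exact sConvex_inter_sphereSet hpos hhom hconv hcone hpt

theorem stmt2 {n : ℕ} (hn : 2 ≤ n) (Φ : EuclideanSpace ℝ (Fin n) → ℝ)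
    (hc : Continuous Φ) (hnn : ∀ x, 0 ≤ Φ x)
    (hhom : ∀ (t : ℝ), 0 ≤ t → ∀ x, Φ (t • x) = t * Φ x)
    (hzero : ∀ x, Φ x = 0 ↔ x = 0)
    (S : Set (EuclideanSpace ℝ (Fin n))) (hne : S.Nonempty) (hsub : S ⊆ sphereSet Φ) :
    SConvex Φ S ↔
      ∃ K : Set (EuclideanSpace ℝ (Fin n)),
        Convex ℝ K ∧ (∀ c : ℝ, 0 ≤ c → ∀ y ∈ K, c • y ∈ K) ∧ K ≠ {0} ∧
        K ∩ (-K) = {0} ∧ S = K ∩ sphereSet Φ :=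
  stmt2_general Φ hnn hhom hzero S hne hsub
end

section
/- A nonempty set S ⊆ S_Φ is s-convex if and only if S = ρ(conv S), where conv S is the convex hull of S in ℝⁿ. -/
open Set
open scoped RealInnerProductSpace

/-!
The points `z` with `ρ z ∈ S` form a cone, and s-convexity of `S` makes this cone convex:
`a • z + b • w` is a positive multiple of a convex combination of `ρ z` and `ρ w`, and `ρ`
is invariant under positive scaling. The cone contains `S`, hence `conv S`, so
`ρ (conv S) ⊆ S`. The rest is immediate, as `ρ` fixes `S_Φ` pointwise and `conv S` is convex.
-/

section Rho

variable {n : ℕ} {Φ : EuclideanSpace ℝ (Fin n) → ℝ}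

theorem rho_eq_self_of_mem_sphereSet {x : EuclideanSpace ℝ (Fin n)} (hx : x ∈ sphereSet Φ) :
    rho Φ x = x := by
  have hx' : Φ x = 1 := hx
  simp [rho, hx']

theorem smul_rho_self {z : EuclideanSpace ℝ (Fin n)} (hz : Φ z ≠ 0) : Φ z • rho Φ z = z := by
  rw [rho, smul_smul, mul_inv_cancel₀ hz, one_smul]

variable (hhom : ∀ (t : ℝ), 0 ≤ t → ∀ x, Φ (t • x) = t * Φ x)
include hhom

theorem rho_smul_of_pos {t : ℝ} (ht : 0 < t) (v : EuclideanSpace ℝ (Fin n)) :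
    rho Φ (t • v) = rho Φ v := by
  rw [rho, rho, hhom t ht.le, mul_inv_rev, smul_smul, mul_assoc, inv_mul_cancel₀ ht.ne', mul_one]

theorem pos_of_rho_mem_sphereSet (hnn : ∀ x, 0 ≤ Φ x) {z : EuclideanSpace ℝ (Fin n)}
    (hz : rho Φ z ∈ sphereSet Φ) : 0 < Φ z := by
  refine (hnn z).lt_of_ne fun h0 => ?_
  have hz' : Φ (rho Φ z) = 1 := hz
  have hΦ0 : Φ 0 = 0 := by simpa using hhom 0 le_rfl 0
  rw [rho, ← h0, inv_zero, zero_smul, hΦ0] at hz'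
  exact zero_ne_one hz'

theorem SConvex.rho_add_mem {S : Set (EuclideanSpace ℝ (Fin n))} (hS : SConvex Φ S)
    {x y : EuclideanSpace ℝ (Fin n)} (hx : x ∈ S) (hy : y ∈ S) {p q : ℝ} (hp : 0 ≤ p)
    (hq : 0 ≤ q) (hpq : 0 < p + q) : rho Φ (p • x + q • y) ∈ S := by
  have hcomb : p • x + q • y = (p + q) • ((p / (p + q)) • x + (1 - p / (p + q)) • y) := by
    rw [one_sub_div hpq.ne', add_sub_cancel_left, smul_add, smul_smul, smul_smul,
      mul_div_cancel₀ _ hpq.ne', mul_div_cancel₀ _ hpq.ne']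
  rw [hcomb, rho_smul_of_pos hhom hpq]
  exact hS x hx y hy _ ⟨div_nonneg hp hpq.le, div_le_one_of_le₀ (by linarith) hpq.le⟩

theorem SConvex.convex_rho_preimage (hnn : ∀ x, 0 ≤ Φ x) {S : Set (EuclideanSpace ℝ (Fin n))}
    (hS : SConvex Φ S) (hsub : S ⊆ sphereSet Φ) : Convex ℝ (rho Φ ⁻¹' S) := by
  intro z hz w hw a b ha hb hab
  have hcz := pos_of_rho_mem_sphereSet hhom hnn (hsub hz)
  have hcw := pos_of_rho_mem_sphereSet hhom hnn (hsub hw)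
  have hcomb : a • z + b • w = (a * Φ z) • rho Φ z + (b * Φ w) • rho Φ w := by
    rw [mul_smul, mul_smul, smul_rho_self hcz.ne', smul_rho_self hcw.ne']
  rw [mem_preimage, hcomb]
  refine hS.rho_add_mem hhom hz hw (by positivity) (by positivity) ?_
  rcases ha.eq_or_lt with rfl | ha'
  · rw [zero_add] at hab
    simp [hab, hcw]
  · positivity

end Rho

theorem stmt4_general {n : ℕ} (Φ : EuclideanSpace ℝ (Fin n) → ℝ)
    (hnn : ∀ x, 0 ≤ Φ x)
    (hhom : ∀ (t : ℝ), 0 ≤ t → ∀ x, Φ (t • x) = t * Φ x)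
    (S : Set (EuclideanSpace ℝ (Fin n))) (hsub : S ⊆ sphereSet Φ) :
    SConvex Φ S ↔ S = rho Φ '' (convexHull ℝ S) := by
  constructor
  · intro hS
    refine Subset.antisymm
      (fun s hs => ⟨s, subset_convexHull ℝ S hs, rho_eq_self_of_mem_sphereSet (hsub hs)⟩) ?_
    have hS_cone : S ⊆ rho Φ ⁻¹' S := fun s hs => by
      rwa [mem_preimage, rho_eq_self_of_mem_sphereSet (hsub hs)]
    exact image_subset_iff.mpr (convexHull_min hS_cone (hS.convex_rho_preimage hhom hnn hsub))
  · intro hEq x hx y hy l hl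
    rw [hEq]
    exact mem_image_of_mem _ <| convex_convexHull ℝ S (subset_convexHull ℝ S hx)
      (subset_convexHull ℝ S hy) hl.1 (sub_nonneg.mpr hl.2) (add_sub_cancel l 1)

theorem stmt4 {n : ℕ} (hn : 2 ≤ n) (Φ : EuclideanSpace ℝ (Fin n) → ℝ)
    (hc : Continuous Φ) (hnn : ∀ x, 0 ≤ Φ x)
    (hhom : ∀ (t : ℝ), 0 ≤ t → ∀ x, Φ (t • x) = t * Φ x)
    (hzero : ∀ x, Φ x = 0 ↔ x = 0)
    (S : Set (EuclideanSpace ℝ (Fin n))) (hne : S.Nonempty) (hsub : S ⊆ sphereSet Φ) :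
    SConvex Φ S ↔ S = rho Φ '' (convexHull ℝ S) :=
  stmt4_general Φ hnn hhom S hsub
end

section
/- If C ⊆ S_Φ is a nonempty s-convex set, then there exists a unit vector u₀ ∈ ℝⁿ such that ⟨x, u₀⟩ ≥ 0 for all x ∈ C; i.e., C is contained in a closed hemisphere. -/
open Set
open scoped RealInnerProductSpace

/-
Let `K = [0, ∞) • C` be the cone over `C`. A nonnegative combination `p x + q y` of points of `C`
is `(p + q) z` for a convex combination `z`, and `z ∈ K` because `ρ z ∈ C` and `z = Φ z • ρ z`
(or `z = 0`), so `K` is convex. It is also salient: a vanishing positive combination of points of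
`C` would put `ρ 0 = 0` in `C`, impossible since `Φ 0 = 0 ≠ 1`. Hence `0` is a boundary point of
the convex set `K`, and a supporting hyperplane of `K` at `0` bounds the required hemisphere.
-/

open scoped Pointwise

theorem exists_ne_zero_inner_le_of_notMem_interior {E : Type*} [NormedAddCommGroup E]
    [InnerProductSpace ℝ E] [FiniteDimensional ℝ E] {s : Set E} (hs : Convex ℝ s) {x : E}
    (hxs : x ∈ s) (hx : x ∉ interior s) :
    ∃ u : E, u ≠ 0 ∧ ∀ y ∈ s, ⟪y, u⟫ ≤ ⟪x, u⟫ := by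
  by_cases hint : (interior s).Nonempty
  · obtain ⟨f, hf, hfs⟩ := geometric_hahn_banach_of_nonempty_interior_point hs hx hint
    refine ⟨(InnerProductSpace.toDual ℝ E).symm f, by simpa using hf, fun y hy => ?_⟩
    simpa [real_inner_comm _ y, real_inner_comm _ x] using hfs y hy
  · have hspan : vectorSpan ℝ s ≠ ⊤ := by
      rwa [Ne, ← AffineSubspace.affineSpan_eq_top_iff_vectorSpan_eq_top_of_nonempty ℝ E E
        ⟨x, hxs⟩, ← hs.interior_nonempty_iff_affineSpan_eq_top]
    obtain ⟨u, hu, hu0⟩ :=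
      Submodule.ne_bot_iff _ |>.mp (mt Submodule.orthogonal_eq_bot_iff.mp hspan)
    refine ⟨u, hu0, fun y hy => ?_⟩
    have hyx := (Submodule.mem_orthogonal' _ u).mp hu _ (vsub_mem_vectorSpan ℝ hy hxs)
    rw [vsub_eq_sub, inner_sub_right] at hyx
    rw [real_inner_comm u y, real_inner_comm u x]
    linarith

theorem smul_add_smul_eq_add_smul_combo {E : Type*} [AddCommGroup E] [Module ℝ E] {p q : ℝ}
    (h : p + q ≠ 0) (x y : E) :
    p • x + q • y = (p + q) • ((p / (p + q)) • x + (1 - p / (p + q)) • y) := by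
  rw [smul_add, smul_smul, smul_smul, mul_div_cancel₀ _ h, one_sub_div h, add_sub_cancel_left,
    mul_div_cancel₀ _ h]

theorem div_add_mem_Icc {p q : ℝ} (hp : 0 ≤ p) (hq : 0 ≤ q) : p / (p + q) ∈ Icc (0 : ℝ) 1 :=
  ⟨by positivity, div_le_one_of_le₀ (le_add_of_nonneg_right hq) (add_nonneg hp hq)⟩

section SConvex

variable {n : ℕ} {Φ : EuclideanSpace ℝ (Fin n) → ℝ} {C : Set (EuclideanSpace ℝ (Fin n))}
  {x y z : EuclideanSpace ℝ (Fin n)} {p q : ℝ}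

theorem mem_Ici_smul_of_rho_mem (hnn : ∀ x, 0 ≤ Φ x) (hzero : ∀ x, Φ x = 0 → x = 0)
    (hz : rho Φ z ∈ C) : z ∈ Ici (0 : ℝ) • C := by
  rcases (hnn z).eq_or_lt with hΦ | hΦ
  · exact mem_smul.2 ⟨0, self_mem_Ici, _, hz, by rw [zero_smul, hzero z hΦ.symm]⟩
  · exact mem_smul.2
      ⟨Φ z, hΦ.le, _, hz, by rw [rho, smul_smul, mul_inv_cancel₀ hΦ.ne', one_smul]⟩

theorem SConvex.smul_add_smul_mem_Ici_smul (hC : SConvex Φ C) (hnn : ∀ x, 0 ≤ Φ x)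
    (hzero : ∀ x, Φ x = 0 → x = 0) (hx : x ∈ C) (hy : y ∈ C) (hp : 0 ≤ p) (hq : 0 ≤ q) :
    p • x + q • y ∈ Ici (0 : ℝ) • C := by
  rcases (add_nonneg hp hq).eq_or_lt with hpq | hpq
  · obtain ⟨rfl, rfl⟩ : p = 0 ∧ q = 0 := ⟨by linarith, by linarith⟩
    exact mem_smul.2 ⟨0, self_mem_Ici, x, hx, by simp⟩
  obtain ⟨t, ht, w, hw, hzw⟩ := mem_smul.1 <|
    mem_Ici_smul_of_rho_mem hnn hzero (hC x hx y hy _ (div_add_mem_Icc hp hq))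
  refine mem_smul.2 ⟨(p + q) * t, mul_nonneg hpq.le ht, w, hw, ?_⟩
  rw [smul_add_smul_eq_add_smul_combo hpq.ne', ← hzw, smul_smul]

theorem SConvex.convex_Ici_smul (hC : SConvex Φ C) (hnn : ∀ x, 0 ≤ Φ x)
    (hzero : ∀ x, Φ x = 0 → x = 0) : Convex ℝ (Ici (0 : ℝ) • C) := by
  intro _ hu _ hv a b ha hb _
  obtain ⟨s, hs, x, hx, rfl⟩ := mem_smul.1 hu
  obtain ⟨t, ht, y, hy, rfl⟩ := mem_smul.1 hv
  simp only [smul_smul]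
  exact hC.smul_add_smul_mem_Ici_smul hnn hzero hx hy (mul_nonneg ha hs) (mul_nonneg hb ht)

theorem SConvex.smul_add_smul_ne_zero (hC : SConvex Φ C)
    (h0 : (0 : EuclideanSpace ℝ (Fin n)) ∉ C) (hx : x ∈ C) (hy : y ∈ C) (hp : 0 < p)
    (hq : 0 ≤ q) : p • x + q • y ≠ 0 := by
  intro h
  have hpq : p + q ≠ 0 := by positivity
  have hcombo := hC x hx y hy _ (div_add_mem_Icc hp.le hq)
  rw [smul_add_smul_eq_add_smul_combo hpq, smul_eq_zero_iff_right hpq] at h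
  rw [h, rho, smul_zero] at hcombo
  exact h0 hcombo

theorem SConvex.zero_notMem_interior_Ici_smul (hC : SConvex Φ C)
    (h0 : (0 : EuclideanSpace ℝ (Fin n)) ∉ C) :
    (0 : EuclideanSpace ℝ (Fin n)) ∉ interior (Ici (0 : ℝ) • C) := by
  intro hint
  obtain ⟨-, -, c, hc, -⟩ := mem_smul.1 (interior_subset hint)
  have hnhds : ∀ᶠ t in nhds (0 : ℝ), -(t • c) ∈ Ici (0 : ℝ) • C :=
    (continuous_id.smul continuous_const).neg.continuousAt.preimage_mem_nhds
      (by simpa using mem_interior_iff_mem_nhds.mp hint)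
  obtain ⟨t, hneg, ht⟩ :=
    ((hnhds.filter_mono nhdsWithin_le_nhds).and (self_mem_nhdsWithin (s := Ioi 0))).exists
  obtain ⟨s, hs, c', hc', hsc'⟩ := mem_smul.1 hneg
  exact hC.smul_add_smul_ne_zero h0 hc hc' ht hs (by rw [hsc', add_neg_cancel])

end SConvex

theorem stmt8_general {n : ℕ} (Φ : EuclideanSpace ℝ (Fin n) → ℝ)
    (hnn : ∀ x, 0 ≤ Φ x)
    (hzero : ∀ x, Φ x = 0 ↔ x = 0)
    (C : Set (EuclideanSpace ℝ (Fin n))) (hne : C.Nonempty) (hsub : C ⊆ sphereSet Φ)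
    (hC : SConvex Φ C) :
    ∃ u₀ : EuclideanSpace ℝ (Fin n), ‖u₀‖ = 1 ∧ ∀ x ∈ C, 0 ≤ ⟪x, u₀⟫ := by
  have h0 : (0 : EuclideanSpace ℝ (Fin n)) ∉ C := fun h => by
    simpa [sphereSet, (hzero 0).2 rfl] using hsub h
  obtain ⟨c, hc⟩ := hne
  have hCK : C ⊆ Ici (0 : ℝ) • C := fun x hx =>
    mem_smul.2 ⟨1, mem_Ici.2 zero_le_one, x, hx, one_smul ℝ x⟩
  obtain ⟨u, hu, hK⟩ := exists_ne_zero_inner_le_of_notMem_interior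
    (hC.convex_Ici_smul hnn fun x => (hzero x).1)
    (mem_smul.2 ⟨0, self_mem_Ici, c, hc, zero_smul ℝ c⟩)
    (hC.zero_notMem_interior_Ici_smul h0)
  refine ⟨-(‖u‖⁻¹ • u), by simp [norm_smul, hu], fun x hx => ?_⟩
  have hxu : ⟪x, u⟫ ≤ 0 := by simpa using hK x (hCK hx)
  rw [inner_neg_right, real_inner_smul_right]
  nlinarith [inv_nonneg.2 (norm_nonneg u)]

theorem stmt8 {n : ℕ} (hn : 2 ≤ n) (Φ : EuclideanSpace ℝ (Fin n) → ℝ)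
    (hc : Continuous Φ) (hnn : ∀ x, 0 ≤ Φ x)
    (hhom : ∀ (t : ℝ), 0 ≤ t → ∀ x, Φ (t • x) = t * Φ x)
    (hzero : ∀ x, Φ x = 0 ↔ x = 0)
    (C : Set (EuclideanSpace ℝ (Fin n))) (hne : C.Nonempty) (hsub : C ⊆ sphereSet Φ)
    (hC : SConvex Φ C) :
    ∃ u₀ : EuclideanSpace ℝ (Fin n), ‖u₀‖ = 1 ∧ ∀ x ∈ C, 0 ≤ ⟪x, u₀⟫ :=
  stmt8_general Φ hnn hzero C hne hsub hC
end

section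
/- If C ⊆ S_Φ is a nonempty closed s-convex set, then there exist a unit vector u₀ ∈ ℝⁿ and α > 0 such that ⟨x, u₀⟩ ≥ α for all x ∈ C; i.e., C is contained in an open hemisphere, uniformly. -/
open Set
open scoped RealInnerProductSpace

/-
If `C` is s-convex, the cone `(0, ∞) • C` is convex: a convex combination of `s • c` and `s' • c'`
is a positive multiple of a convex combination `w` of `c` and `c'`, hence a positive multiple of
`ρ w ∈ C`. This cone misses `0`, so `0 ∉ conv C`. As `C` is compact (`Φ` is comparable to the norm),
so is `conv C` (Carathéodory), and Hahn–Banach separates it strictly from `0`.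
-/

open scoped Pointwise

theorem apply_zero_of_homogeneous {M : Type*} [AddCommGroup M] [Module ℝ M] {Φ : M → ℝ}
    (hhom : ∀ t : ℝ, 0 ≤ t → ∀ x, Φ (t • x) = t * Φ x) : Φ 0 = 0 := by
  simpa using hhom 0 le_rfl 0

/- Carathéodory: `finrank + 1` points suffice; shorter combinations are padded with zero weights. -/
theorem convexHull_eq_image_stdSimplex_prod_pi {𝕜 E : Type*} [Field 𝕜] [LinearOrder 𝕜]
    [IsStrictOrderedRing 𝕜] [AddCommGroup E] [Module 𝕜 E] [FiniteDimensional 𝕜 E] (s : Set E) :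
    convexHull 𝕜 s =
      (fun p : (Fin (Module.finrank 𝕜 E + 1) → 𝕜) × (Fin (Module.finrank 𝕜 E + 1) → E) =>
        ∑ i, p.1 i • p.2 i) '' (stdSimplex 𝕜 _ ×ˢ univ.pi fun _ => s) := by
  refine Subset.antisymm (fun x hx => ?_) ?_
  · obtain ⟨c, hc⟩ : s.Nonempty := convexHull_nonempty_iff.1 ⟨x, hx⟩
    obtain ⟨ι, _, z, w, hzs, hind, hw0, hw1, rfl⟩ := eq_pos_convex_span_of_mem_convexHull hx
    have hcard : Fintype.card ι ≤ Module.finrank 𝕜 E + 1 :=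
      hind.card_le_finrank_succ.trans (Nat.succ_le_succ (Submodule.finrank_le _))
    obtain ⟨e⟩ : Nonempty (ι ↪ Fin (Module.finrank 𝕜 E + 1)) :=
      Function.Embedding.nonempty_of_card_le (by simpa using hcard)
    refine ⟨(Function.extend e w 0, Function.extend e z fun _ => c), ⟨⟨fun j => ?_, ?_⟩, ?_⟩, ?_⟩
    · by_cases hj : ∃ i, e i = j
      · obtain ⟨i, rfl⟩ := hj
        simpa only [e.injective.extend_apply] using (hw0 i).le
      · simp only [Function.extend_apply' _ _ _ hj, Pi.zero_apply, le_refl]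
    · rw [← hw1]
      refine (Fintype.sum_of_injective e e.injective w _ (fun j hj => ?_) fun i => ?_).symm
      · exact Function.extend_apply' _ _ _ hj
      · exact (e.injective.extend_apply _ _ _).symm
    · intro j _
      by_cases hj : ∃ i, e i = j
      · obtain ⟨i, rfl⟩ := hj
        simpa only [e.injective.extend_apply] using hzs (mem_range_self i)
      · simpa only [Function.extend_apply' _ _ _ hj] using hc
    · refine (Fintype.sum_of_injective e e.injective _ _ (fun j hj => ?_) fun i => ?_).symm
      · simp only [Function.extend_apply' _ _ _ hj, Pi.zero_apply, zero_smul]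
      · simp only [e.injective.extend_apply]
  · rintro _ ⟨⟨w, z⟩, ⟨⟨hw0, hw1⟩, hz⟩, rfl⟩
    exact (convex_convexHull 𝕜 s).sum_mem (fun i _ => hw0 i) hw1
      fun i _ => subset_convexHull 𝕜 s (hz i (mem_univ i))

theorem IsCompact.convexHull {E : Type*} [NormedAddCommGroup E] [NormedSpace ℝ E]
    [FiniteDimensional ℝ E] {s : Set E} (hs : IsCompact s) : IsCompact (convexHull ℝ s) := by
  rw [convexHull_eq_image_stdSimplex_prod_pi]
  exact ((isCompact_stdSimplex ℝ _).prod (isCompact_univ_pi fun _ => hs)).image (by fun_prop)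

theorem exists_unit_inner_ge_of_zero_notMem {E : Type*} [NormedAddCommGroup E]
    [InnerProductSpace ℝ E] [CompleteSpace E] {K : Set E} (hconv : Convex ℝ K)
    (hcl : IsClosed K) (hne : K.Nonempty) (h0 : (0 : E) ∉ K) :
    ∃ u : E, ‖u‖ = 1 ∧ ∃ α : ℝ, 0 < α ∧ ∀ x ∈ K, α ≤ ⟪x, u⟫ := by
  obtain ⟨f, a, hfa, haf⟩ := geometric_hahn_banach_point_closed hconv hcl h0
  rw [map_zero] at hfa
  set y := (InnerProductSpace.toDual ℝ E).symm f
  have hy : ∀ x, ⟪x, y⟫ = f x := fun x => by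
    rw [real_inner_comm]; exact InnerProductSpace.toDual_symm_apply
  have hy0 : 0 < ‖y‖ := by
    obtain ⟨c, hc⟩ := hne
    refine norm_pos_iff.2 fun h => ?_
    have := haf c hc
    rw [← hy, h, inner_zero_right] at this
    linarith
  refine ⟨‖y‖⁻¹ • y, by rw [norm_smul, norm_inv, norm_norm, inv_mul_cancel₀ hy0.ne'],
    a / ‖y‖, div_pos hfa hy0, fun x hx => ?_⟩
  rw [real_inner_smul_right, hy, div_eq_inv_mul]
  exact mul_le_mul_of_nonneg_left (haf x hx).le (inv_nonneg.2 hy0.le)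

theorem exists_pos_mul_norm_le_of_homogeneous {E : Type*} [NormedAddCommGroup E]
    [NormedSpace ℝ E] [ProperSpace E] {Φ : E → ℝ} (hc : Continuous Φ)
    (hpos : ∀ x, x ≠ 0 → 0 < Φ x) (hhom : ∀ t : ℝ, 0 ≤ t → ∀ x, Φ (t • x) = t * Φ x) :
    ∃ m : ℝ, 0 < m ∧ ∀ x, m * ‖x‖ ≤ Φ x := by
  rcases subsingleton_or_nontrivial E with hE | hE
  · refine ⟨1, one_pos, fun x => ?_⟩
    rw [Subsingleton.elim x 0, norm_zero, mul_zero, apply_zero_of_homogeneous hhom]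
  obtain ⟨z, hz, hmin⟩ := (isCompact_sphere (0 : E) 1).exists_isMinOn
    (NormedSpace.sphere_nonempty.2 zero_le_one) hc.continuousOn
  refine ⟨Φ z, hpos z (ne_zero_of_mem_unit_sphere ⟨z, hz⟩), fun x => ?_⟩
  rcases eq_or_ne x 0 with rfl | hx
  · rw [norm_zero, mul_zero, apply_zero_of_homogeneous hhom]
  have hxn : 0 < ‖x‖ := norm_pos_iff.2 hx
  calc Φ z * ‖x‖ ≤ Φ (‖x‖⁻¹ • x) * ‖x‖ := by
        refine mul_le_mul_of_nonneg_right (hmin ?_) hxn.le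
        rw [mem_sphere_zero_iff_norm, norm_smul, norm_inv, norm_norm, inv_mul_cancel₀ hxn.ne']
    _ = Φ x := by rw [hhom _ (inv_nonneg.2 hxn.le)]; field_simp

section SConvex

variable {n : ℕ} {Φ : EuclideanSpace ℝ (Fin n) → ℝ} {C : Set (EuclideanSpace ℝ (Fin n))}

theorem smul_rho_eq_self {x : EuclideanSpace ℝ (Fin n)} (hx : Φ x ≠ 0) : Φ x • rho Φ x = x :=
  smul_inv_smul₀ hx x

theorem isCompact_sphereSet (hc : Continuous Φ) (hpos : ∀ x, x ≠ 0 → 0 < Φ x)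
    (hhom : ∀ t : ℝ, 0 ≤ t → ∀ x, Φ (t • x) = t * Φ x) : IsCompact (sphereSet Φ) := by
  obtain ⟨m, hm, hmΦ⟩ := exists_pos_mul_norm_le_of_homogeneous hc hpos hhom
  refine Metric.isCompact_of_isClosed_isBounded (isClosed_eq hc continuous_const)
    (isBounded_iff_forall_norm_le.2 ⟨m⁻¹, fun x hx => ?_⟩)
  rw [← one_div, le_div_iff₀' hm]
  exact (hmΦ x).trans_eq hx

theorem convex_Ioi_smul_of_sConvex (hnn : ∀ x, 0 ≤ Φ x)
    (hhom : ∀ t : ℝ, 0 ≤ t → ∀ x, Φ (t • x) = t * Φ x) (hsub : C ⊆ sphereSet Φ)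
    (hC : SConvex Φ C) : Convex ℝ (Ioi (0 : ℝ) • C) := by
  rintro _ ⟨s, hs : 0 < s, c, hc, rfl⟩ _ ⟨s', hs' : 0 < s', c', hc', rfl⟩ a b ha hb hab
  set T := a * s + b * s'
  have hT : 0 < T := by
    rcases ha.eq_or_lt with rfl | ha
    · rw [zero_add] at hab
      simpa [T, hab] using hs'
    · exact add_pos_of_pos_of_nonneg (mul_pos ha hs) (mul_nonneg hb hs'.le)
  set μ := a * s / T
  have hμ : μ ∈ Icc (0 : ℝ) 1 :=
    ⟨by positivity, (div_le_one hT).2 (le_add_of_nonneg_right (mul_nonneg hb hs'.le))⟩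
  set w := μ • c + (1 - μ) • c'
  have hwC : rho Φ w ∈ C := hC c hc c' hc' μ hμ
  have hΦw : 0 < Φ w := by
    refine (hnn w).lt_of_ne' fun h => ?_
    have h1 : Φ (rho Φ w) = 1 := hsub hwC
    rw [rho, h, inv_zero, zero_smul, apply_zero_of_homogeneous hhom] at h1
    exact zero_ne_one h1
  refine ⟨T * Φ w, mem_Ioi.2 (mul_pos hT hΦw), rho Φ w, hwC, ?_⟩
  change (T * Φ w) • rho Φ w = a • (s • c) + b • (s' • c')
  rw [mul_smul, smul_rho_eq_self hΦw.ne']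
  simp only [w, μ, smul_add, smul_smul]
  match_scalars
  · field_simp
  · field_simp
    simp only [T]
    ring

theorem zero_notMem_convexHull_of_sConvex (hnn : ∀ x, 0 ≤ Φ x)
    (hhom : ∀ t : ℝ, 0 ≤ t → ∀ x, Φ (t • x) = t * Φ x) (hsub : C ⊆ sphereSet Φ)
    (hC : SConvex Φ C) : (0 : EuclideanSpace ℝ (Fin n)) ∉ convexHull ℝ C := by
  intro h0
  obtain ⟨t, ht, c, hc, htc⟩ :=
    (convex_Ioi_smul_of_sConvex hnn hhom hsub hC).convexHull_subset_iff.2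
      (fun c hc => ⟨1, mem_Ioi.2 one_pos, c, hc, one_smul ℝ c⟩) h0
  have hΦc : Φ c = 1 := hsub hc
  rcases smul_eq_zero.1 htc with h | rfl
  · exact ht.ne' h
  · rw [apply_zero_of_homogeneous hhom] at hΦc
    exact zero_ne_one hΦc

end SConvex

theorem stmt9_general {n : ℕ} (Φ : EuclideanSpace ℝ (Fin n) → ℝ)
    (hc : Continuous Φ) (hnn : ∀ x, 0 ≤ Φ x)
    (hhom : ∀ (t : ℝ), 0 ≤ t → ∀ x, Φ (t • x) = t * Φ x)
    (hzero : ∀ x, Φ x = 0 ↔ x = 0)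
    (C : Set (EuclideanSpace ℝ (Fin n))) (hne : C.Nonempty) (hsub : C ⊆ sphereSet Φ)
    (hcl : IsClosed C) (hC : SConvex Φ C) :
    ∃ u₀ : EuclideanSpace ℝ (Fin n), ‖u₀‖ = 1 ∧ ∃ α : ℝ, 0 < α ∧ ∀ x ∈ C, α ≤ ⟪x, u₀⟫ := by
  have hpos : ∀ x, x ≠ 0 → 0 < Φ x := fun x hx => (hnn x).lt_of_ne' fun h => hx ((hzero x).1 h)
  have hCcpt : IsCompact C := (isCompact_sphereSet hc hpos hhom).of_isClosed_subset hcl hsub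
  obtain ⟨u, hu, α, hα, hαu⟩ := exists_unit_inner_ge_of_zero_notMem (convex_convexHull ℝ C)
    hCcpt.convexHull.isClosed hne.convexHull (zero_notMem_convexHull_of_sConvex hnn hhom hsub hC)
  exact ⟨u, hu, α, hα, fun x hx => hαu x (subset_convexHull ℝ C hx)⟩

theorem stmt9 {n : ℕ} (hn : 2 ≤ n) (Φ : EuclideanSpace ℝ (Fin n) → ℝ)
    (hc : Continuous Φ) (hnn : ∀ x, 0 ≤ Φ x)
    (hhom : ∀ (t : ℝ), 0 ≤ t → ∀ x, Φ (t • x) = t * Φ x)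
    (hzero : ∀ x, Φ x = 0 ↔ x = 0)
    (C : Set (EuclideanSpace ℝ (Fin n))) (hne : C.Nonempty) (hsub : C ⊆ sphereSet Φ)
    (hcl : IsClosed C) (hC : SConvex Φ C) :
    ∃ u₀ : EuclideanSpace ℝ (Fin n), ‖u₀‖ = 1 ∧ ∃ α : ℝ, 0 < α ∧ ∀ x ∈ C, α ≤ ⟪x, u₀⟫ :=
  stmt9_general Φ hc hnn hhom hzero C hne hsub hcl hC
end

section
/- A nonempty set S ⊆ S_Φ is closed and s-convex if and only if ℝ₊S is a pointed, closed, convex cone in ℝⁿ. -/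
open Set
open scoped RealInnerProductSpace

/-!
Away from the origin, `rho Φ y ∈ S` holds exactly when `y ∈ ℝ₊S` (`rayCone S`). Hence s-convexity
of `S` says that every segment between two points of `S` lies in `ℝ₊S` and misses `0`: the first
half is convexity of the cone `ℝ₊S`, the second its pointedness. Closedness passes from `ℝ₊S` to
`S = ℝ₊S ∩ S_Φ`, and back because `rho` is continuous off `0` and maps `ℝ₊S` into `S ∪ {0}`.
-/

def rayCone {E : Type*} [AddCommGroup E] [Module ℝ E] (S : Set E) : Set E :=
  {y | ∃ t : ℝ, 0 ≤ t ∧ ∃ x ∈ S, y = t • x}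

section rayCone

variable {E : Type*} [AddCommGroup E] [Module ℝ E] {S : Set E}

theorem subset_rayCone : S ⊆ rayCone S :=
  fun x hx => ⟨1, zero_le_one, x, hx, (one_smul ℝ x).symm⟩

theorem zero_mem_rayCone (hne : S.Nonempty) : (0 : E) ∈ rayCone S :=
  let ⟨x, hx⟩ := hne
  ⟨0, le_rfl, x, hx, (zero_smul ℝ x).symm⟩

theorem smul_mem_rayCone {c : ℝ} (hc : 0 ≤ c) {y : E} (hy : y ∈ rayCone S) :
    c • y ∈ rayCone S := by
  obtain ⟨t, ht, x, hx, rfl⟩ := hy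
  exact ⟨c * t, mul_nonneg hc ht, x, hx, smul_smul c t x⟩

theorem exists_mem_Icc_smul_add_smul_eq {u v : ℝ} (hu : 0 ≤ u) (hv : 0 ≤ v)
    (huv : 0 < u + v) (x y : E) :
    ∃ l ∈ Icc (0 : ℝ) 1, u • x + v • y = (u + v) • (l • x + (1 - l) • y) := by
  refine ⟨u / (u + v), ⟨by positivity, (div_le_one huv).2 (by linarith)⟩, ?_⟩
  have hl : (u + v) * (u / (u + v)) = u := mul_div_cancel₀ u huv.ne'
  have hl' : (u + v) * (1 - u / (u + v)) = v := by rw [mul_sub, hl]; ring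
  rw [smul_add, smul_smul, smul_smul, hl, hl']

theorem convex_rayCone_iff :
    Convex ℝ (rayCone S) ↔
      ∀ x ∈ S, ∀ y ∈ S, ∀ l ∈ Icc (0 : ℝ) 1, l • x + (1 - l) • y ∈ rayCone S := by
  refine ⟨fun h x hx y hy l hl =>
    h (subset_rayCone hx) (subset_rayCone hy) hl.1 (sub_nonneg.2 hl.2) (by ring), ?_⟩
  rintro h _ ⟨t, ht, x, hx, rfl⟩ _ ⟨s, hs, y, hy, rfl⟩ a b ha hb -
  rw [smul_smul, smul_smul]
  rcases (add_nonneg (mul_nonneg ha ht) (mul_nonneg hb hs)).eq_or_lt with h0 | hpos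
  · have ha0 : a * t = 0 := by linarith [mul_nonneg ha ht, mul_nonneg hb hs]
    have hb0 : b * s = 0 := by linarith [mul_nonneg ha ht, mul_nonneg hb hs]
    rw [ha0, hb0, zero_smul, zero_smul, add_zero]
    exact zero_mem_rayCone ⟨x, hx⟩
  · obtain ⟨l, hl, heq⟩ :=
      exists_mem_Icc_smul_add_smul_eq (mul_nonneg ha ht) (mul_nonneg hb hs) hpos x y
    rw [heq]
    exact smul_mem_rayCone hpos.le (h x hx y hy l hl)

theorem rayCone_inter_neg_eq_singleton_zero_iff (hne : S.Nonempty) (h0 : (0 : E) ∉ S) :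
    rayCone S ∩ -rayCone S = {0} ↔
      ∀ x ∈ S, ∀ y ∈ S, ∀ l ∈ Icc (0 : ℝ) 1, l • x + (1 - l) • y ≠ 0 := by
  have hne0 : ∀ x ∈ S, x ≠ 0 := fun x hx hx0 => h0 (hx0 ▸ hx)
  constructor
  · intro hK x hx y hy l hl hxy
    have hneg : -(l • x) = (1 - l) • y := by linear_combination (norm := module) -hxy
    have hlx : l • x ∈ rayCone S ∩ -rayCone S :=
      ⟨smul_mem_rayCone hl.1 (subset_rayCone hx),
        by rw [mem_neg, hneg]; exact smul_mem_rayCone (sub_nonneg.2 hl.2) (subset_rayCone hy)⟩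
    rw [hK, mem_singleton_iff] at hlx
    have hl0 : l = 0 := (smul_eq_zero.1 hlx).resolve_right (hne0 x hx)
    rw [hlx, neg_zero, hl0, sub_zero, one_smul] at hneg
    exact hne0 y hy hneg.symm
  · intro h
    refine subset_antisymm ?_ (singleton_subset_iff.2 ⟨zero_mem_rayCone hne, by
      rw [mem_neg, neg_zero]; exact zero_mem_rayCone hne⟩)
    rintro _ ⟨⟨t, ht, x, hx, rfl⟩, s, hs, y, hy, hneg⟩
    rw [mem_singleton_iff]
    rcases ht.eq_or_lt with rfl | htpos
    · exact zero_smul ℝ x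
    rcases hs.eq_or_lt with rfl | hspos
    · rw [zero_smul, neg_eq_zero] at hneg
      exact hneg
    have hsum : t • x + s • y = 0 := by linear_combination (norm := module) -hneg
    obtain ⟨l, hl, heq⟩ := exists_mem_Icc_smul_add_smul_eq htpos.le hspos.le
      (add_pos htpos hspos) x y
    rw [heq, smul_eq_zero] at hsum
    exact absurd (hsum.resolve_left (add_pos htpos hspos).ne') (h x hx y hy l hl)

end rayCone

section rho

variable {n : ℕ} {Φ : EuclideanSpace ℝ (Fin n) → ℝ} {S : Set (EuclideanSpace ℝ (Fin n))}

theorem rho_zero : rho Φ 0 = 0 := smul_zero _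

theorem zero_notMem_of_subset_sphereSet (hhom : ∀ (t : ℝ), 0 ≤ t → ∀ x, Φ (t • x) = t * Φ x)
    (hsub : S ⊆ sphereSet Φ) : 0 ∉ S := fun h0 => by
  have h1 : Φ 0 = 1 := hsub h0
  simpa [h1] using hhom 0 le_rfl 0

theorem rayCone_inter_sphereSet (hhom : ∀ (t : ℝ), 0 ≤ t → ∀ x, Φ (t • x) = t * Φ x)
    (hsub : S ⊆ sphereSet Φ) : rayCone S ∩ sphereSet Φ = S := by
  refine subset_antisymm ?_ fun x hx => ⟨subset_rayCone hx, hsub hx⟩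
  rintro _ ⟨⟨t, ht, x, hx, rfl⟩, h1⟩
  have hxt : Φ (t • x) = t := by rw [hhom t ht, hsub hx, mul_one]
  have ht1 : t = 1 := hxt ▸ h1
  rwa [ht1, one_smul]

theorem rho_mem_iff (hnn : ∀ x, 0 ≤ Φ x) (hhom : ∀ (t : ℝ), 0 ≤ t → ∀ x, Φ (t • x) = t * Φ x)
    (hzero : ∀ x, Φ x = 0 ↔ x = 0) (hsub : S ⊆ sphereSet Φ) {y : EuclideanSpace ℝ (Fin n)} :
    rho Φ y ∈ S ↔ y ∈ rayCone S ∧ y ≠ 0 := by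
  constructor
  · intro hy
    have hy0 : y ≠ 0 := by
      rintro rfl
      exact zero_notMem_of_subset_sphereSet hhom hsub (rho_zero (Φ := Φ) ▸ hy)
    refine ⟨⟨Φ y, hnn y, rho Φ y, hy, ?_⟩, hy0⟩
    rw [rho, smul_smul, mul_inv_cancel₀ (mt (hzero y).1 hy0), one_smul]
  · rintro ⟨⟨t, ht, x, hx, rfl⟩, hy0⟩
    have ht0 : t ≠ 0 := by rintro rfl; exact hy0 (zero_smul ℝ x)
    rwa [rho, hhom t ht, hsub hx, mul_one, smul_smul, inv_mul_cancel₀ ht0, one_smul]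

theorem sConvex_iff (hnn : ∀ x, 0 ≤ Φ x) (hhom : ∀ (t : ℝ), 0 ≤ t → ∀ x, Φ (t • x) = t * Φ x)
    (hzero : ∀ x, Φ x = 0 ↔ x = 0) (hsub : S ⊆ sphereSet Φ) :
    SConvex Φ S ↔ ∀ x ∈ S, ∀ y ∈ S, ∀ l ∈ Icc (0 : ℝ) 1,
      l • x + (1 - l) • y ∈ rayCone S ∧ l • x + (1 - l) • y ≠ 0 := by
  simp only [SConvex, rho_mem_iff hnn hhom hzero hsub]

theorem isClosed_rayCone_iff (hc : Continuous Φ) (hnn : ∀ x, 0 ≤ Φ x)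
    (hhom : ∀ (t : ℝ), 0 ≤ t → ∀ x, Φ (t • x) = t * Φ x) (hzero : ∀ x, Φ x = 0 ↔ x = 0)
    (hne : S.Nonempty) (hsub : S ⊆ sphereSet Φ) :
    IsClosed (rayCone S) ↔ IsClosed S := by
  refine ⟨fun hK => rayCone_inter_sphereSet hhom hsub ▸ hK.inter (isClosed_singleton.preimage hc),
    fun hS => closure_subset_iff_isClosed.1 fun y hy => ?_⟩
  rcases eq_or_ne y 0 with rfl | hy0
  · exact zero_mem_rayCone hne
  have hcont : ContinuousAt (rho Φ) y :=
    (hc.continuousAt.inv₀ (mt (hzero y).1 hy0)).smul continuousAt_id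
  have himage : rho Φ '' rayCone S ⊆ insert 0 S := by
    rintro _ ⟨z, hz, rfl⟩
    rcases eq_or_ne z 0 with rfl | hz0
    · rw [rho_zero]; exact mem_insert 0 S
    · exact mem_insert_of_mem 0 ((rho_mem_iff hnn hhom hzero hsub).2 ⟨hz, hz0⟩)
  have hclosed : IsClosed (insert 0 S) := by
    rw [insert_eq]; exact isClosed_singleton.union hS
  have hrho : rho Φ y ∈ insert 0 S :=
    hclosed.closure_subset_iff.2 himage (hcont.continuousWithinAt.mem_closure_image hy)
  have hrho0 : rho Φ y ≠ 0 := smul_ne_zero (inv_ne_zero (mt (hzero y).1 hy0)) hy0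
  exact ((rho_mem_iff hnn hhom hzero hsub).1 (hrho.resolve_left hrho0)).1

end rho

theorem stmt10_general {n : ℕ} (Φ : EuclideanSpace ℝ (Fin n) → ℝ)
    (hc : Continuous Φ) (hnn : ∀ x, 0 ≤ Φ x)
    (hhom : ∀ (t : ℝ), 0 ≤ t → ∀ x, Φ (t • x) = t * Φ x)
    (hzero : ∀ x, Φ x = 0 ↔ x = 0)
    (S : Set (EuclideanSpace ℝ (Fin n))) (hne : S.Nonempty) (hsub : S ⊆ sphereSet Φ) :
    (IsClosed S ∧ SConvex Φ S) ↔
      (Convex ℝ {y | ∃ t : ℝ, 0 ≤ t ∧ ∃ x ∈ S, y = t • x} ∧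
       (∀ c : ℝ, 0 ≤ c → ∀ y ∈ {y | ∃ t : ℝ, 0 ≤ t ∧ ∃ x ∈ S, y = t • x},
          c • y ∈ {y | ∃ t : ℝ, 0 ≤ t ∧ ∃ x ∈ S, y = t • x}) ∧
       IsClosed {y | ∃ t : ℝ, 0 ≤ t ∧ ∃ x ∈ S, y = t • x} ∧
       {y | ∃ t : ℝ, 0 ≤ t ∧ ∃ x ∈ S, y = t • x} ∩
         (-{y | ∃ t : ℝ, 0 ≤ t ∧ ∃ x ∈ S, y = t • x}) = {0}) := by
  change _ ↔ Convex ℝ (rayCone S) ∧ (∀ c : ℝ, 0 ≤ c → ∀ y ∈ rayCone S, c • y ∈ rayCone S) ∧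
    IsClosed (rayCone S) ∧ rayCone S ∩ -rayCone S = {0}
  rw [sConvex_iff hnn hhom hzero hsub, convex_rayCone_iff,
    isClosed_rayCone_iff hc hnn hhom hzero hne hsub,
    rayCone_inter_neg_eq_singleton_zero_iff hne (zero_notMem_of_subset_sphereSet hhom hsub)]
  exact ⟨fun ⟨hS, hseg⟩ => ⟨fun x hx y hy l hl => (hseg x hx y hy l hl).1,
      fun _ hc _ hy => smul_mem_rayCone hc hy, hS, fun x hx y hy l hl => (hseg x hx y hy l hl).2⟩,
    fun ⟨hconv, _, hS, hpointed⟩ => ⟨hS, fun x hx y hy l hl =>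
      ⟨hconv x hx y hy l hl, hpointed x hx y hy l hl⟩⟩⟩

theorem stmt10 {n : ℕ} (hn : 2 ≤ n) (Φ : EuclideanSpace ℝ (Fin n) → ℝ)
    (hc : Continuous Φ) (hnn : ∀ x, 0 ≤ Φ x)
    (hhom : ∀ (t : ℝ), 0 ≤ t → ∀ x, Φ (t • x) = t * Φ x)
    (hzero : ∀ x, Φ x = 0 ↔ x = 0)
    (S : Set (EuclideanSpace ℝ (Fin n))) (hne : S.Nonempty) (hsub : S ⊆ sphereSet Φ) :
    (IsClosed S ∧ SConvex Φ S) ↔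
      (Convex ℝ {y | ∃ t : ℝ, 0 ≤ t ∧ ∃ x ∈ S, y = t • x} ∧
       (∀ c : ℝ, 0 ≤ c → ∀ y ∈ {y | ∃ t : ℝ, 0 ≤ t ∧ ∃ x ∈ S, y = t • x},
          c • y ∈ {y | ∃ t : ℝ, 0 ≤ t ∧ ∃ x ∈ S, y = t • x}) ∧
       IsClosed {y | ∃ t : ℝ, 0 ≤ t ∧ ∃ x ∈ S, y = t • x} ∧
       {y | ∃ t : ℝ, 0 ≤ t ∧ ∃ x ∈ S, y = t • x} ∩
         (-{y | ∃ t : ℝ, 0 ≤ t ∧ ∃ x ∈ S, y = t • x}) = {0}) :=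
  stmt10_general Φ hc hnn hhom hzero S hne hsub
end

section
/- Let S ⊆ S_Φ be nonempty with 0 ∉ conv S (hull-addible), and define sco S := ρ(conv S). Then sco S is s-convex, and sco S is the intersection of all s-convex subsets of S_Φ containing S (the smallest s-convex set containing S). -/
open Set
open scoped RealInnerProductSpace

/-
Since `Φ` is positively homogeneous, `ρ` is constant on open rays, so `ρ` of any nonnegative
combination of `a` and `b` (not both coefficients zero) is `ρ` of a convex combination of `a`
and `b`. As `0 ∉ conv S`, `Φ > 0` on `conv S` and `ρ` is defined there. Applied to `ρ a, ρ b`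
this gives s-convexity of `ρ(conv S)`; applied to `a, b` it shows that for an s-convex `C ⊇ S`
the set `{x ∈ conv S | ρ x ∈ C}` is convex, hence contains `conv S`.
-/

namespace rho

variable {n : ℕ} {Φ : EuclideanSpace ℝ (Fin n) → ℝ}

theorem smul_of_pos (hhom : ∀ t : ℝ, 0 ≤ t → ∀ x, Φ (t • x) = t * Φ x)
    {t : ℝ} (ht : 0 < t) (x : EuclideanSpace ℝ (Fin n)) : rho Φ (t • x) = rho Φ x := by
  rcases eq_or_ne (Φ x) 0 with h | h
  · simp [rho, hhom t ht.le, h]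
  · rw [rho, rho, hhom t ht.le, smul_smul, mul_inv_rev, inv_mul_cancel_right₀ ht.ne']

theorem apply_of_eq_one {x : EuclideanSpace ℝ (Fin n)} (hx : Φ x = 1) : rho Φ x = x := by
  simp [rho, hx]

theorem mem_sphereSet (hhom : ∀ t : ℝ, 0 ≤ t → ∀ x, Φ (t • x) = t * Φ x)
    {x : EuclideanSpace ℝ (Fin n)} (hx : 0 < Φ x) : rho Φ x ∈ sphereSet Φ := by
  rw [sphereSet, mem_ofPred_eq, rho, hhom _ (inv_nonneg.2 hx.le), inv_mul_cancel₀ hx.ne']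

theorem smul_apply_self {x : EuclideanSpace ℝ (Fin n)} (hx : Φ x ≠ 0) :
    Φ x • rho Φ x = x := by
  rw [rho, smul_smul, mul_inv_cancel₀ hx, one_smul]

theorem exists_smul_add_one_sub_smul_eq (hhom : ∀ t : ℝ, 0 ≤ t → ∀ x, Φ (t • x) = t * Φ x)
    {p q l : ℝ} (hp : 0 < p) (hq : 0 < q) (hl : l ∈ Icc (0 : ℝ) 1)
    (a b : EuclideanSpace ℝ (Fin n)) :
    ∃ l' ∈ Icc (0 : ℝ) 1,
      rho Φ ((l * p) • a + ((1 - l) * q) • b) = rho Φ (l' • a + (1 - l') • b) := by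
  obtain ⟨hl0, hl1⟩ := hl
  have hs : 0 < l * p + (1 - l) * q := by
    rcases hl0.eq_or_lt with rfl | hl0
    · simpa using hq
    · nlinarith [mul_pos hl0 hp, mul_nonneg (sub_nonneg.2 hl1) hq.le]
  set s := l * p + (1 - l) * q
  refine ⟨l * p / s, ⟨by positivity, (div_le_one hs).2 (by nlinarith)⟩, ?_⟩
  have hcomb : (l * p) • a + ((1 - l) * q) • b = s • ((l * p / s) • a + (1 - l * p / s) • b) := by
    have h1 : 1 - l * p / s = (1 - l) * q / s := by field_simp; ring
    rw [h1, smul_add, smul_smul, smul_smul, mul_div_cancel₀ _ hs.ne',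
      mul_div_cancel₀ _ hs.ne']
  rw [hcomb, smul_of_pos hhom hs]

end rho

section

variable {n : ℕ} {Φ : EuclideanSpace ℝ (Fin n) → ℝ}

theorem sConvex_image_rho (hhom : ∀ t : ℝ, 0 ≤ t → ∀ x, Φ (t • x) = t * Φ x)
    {K : Set (EuclideanSpace ℝ (Fin n))} (hK : Convex ℝ K) (hpos : ∀ x ∈ K, 0 < Φ x) :
    SConvex Φ (rho Φ '' K) := by
  rintro _ ⟨a, ha, rfl⟩ _ ⟨b, hb, rfl⟩ l hl
  have hcomb : l • rho Φ a + (1 - l) • rho Φ b = (l * (Φ a)⁻¹) • a + ((1 - l) * (Φ b)⁻¹) • b := by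
    rw [rho, rho, smul_smul, smul_smul]
  obtain ⟨l', ⟨hl'0, hl'1⟩, heq⟩ := rho.exists_smul_add_one_sub_smul_eq hhom
    (inv_pos.2 (hpos a ha)) (inv_pos.2 (hpos b hb)) hl a b
  rw [hcomb, heq]
  exact mem_image_of_mem _ (hK ha hb hl'0 (sub_nonneg.2 hl'1) (add_sub_cancel _ _))

theorem Convex.inter_preimage_rho (hhom : ∀ t : ℝ, 0 ≤ t → ∀ x, Φ (t • x) = t * Φ x)
    {K C : Set (EuclideanSpace ℝ (Fin n))} (hK : Convex ℝ K) (hpos : ∀ x ∈ K, 0 < Φ x)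
    (hC : SConvex Φ C) : Convex ℝ (K ∩ rho Φ ⁻¹' C) := by
  rintro a ⟨haK, haC⟩ b ⟨hbK, hbC⟩ l m hl hm hlm
  refine ⟨hK haK hbK hl hm hlm, ?_⟩
  obtain rfl : m = 1 - l := eq_sub_of_add_eq' hlm
  have hcomb : l • a + (1 - l) • b = (l * Φ a) • rho Φ a + ((1 - l) * Φ b) • rho Φ b := by
    rw [mul_smul, mul_smul, rho.smul_apply_self (hpos a haK).ne',
      rho.smul_apply_self (hpos b hbK).ne']
  obtain ⟨l', hl', heq⟩ := rho.exists_smul_add_one_sub_smul_eq hhom (hpos a haK) (hpos b hbK)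
    ⟨hl, by linarith⟩ (rho Φ a) (rho Φ b)
  rw [mem_preimage, hcomb, heq]
  exact hC _ haC _ hbC l' hl'

theorem image_rho_convexHull_subset (hhom : ∀ t : ℝ, 0 ≤ t → ∀ x, Φ (t • x) = t * Φ x)
    {S C : Set (EuclideanSpace ℝ (Fin n))} (hS : S ⊆ sphereSet Φ)
    (hpos : ∀ x ∈ convexHull ℝ S, 0 < Φ x) (hC : SConvex Φ C) (hSC : S ⊆ C) :
    rho Φ '' convexHull ℝ S ⊆ C := by
  have hsub : convexHull ℝ S ⊆ convexHull ℝ S ∩ rho Φ ⁻¹' C :=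
    convexHull_min (fun s hs => ⟨subset_convexHull ℝ S hs, by
      rw [mem_preimage, rho.apply_of_eq_one (hS hs)]; exact hSC hs⟩)
      ((convex_convexHull ℝ S).inter_preimage_rho hhom hpos hC)
  exact image_subset_iff.2 fun x hx => (hsub hx).2

end

theorem stmt12_general {n : ℕ} (Φ : EuclideanSpace ℝ (Fin n) → ℝ)
    (hnn : ∀ x, 0 ≤ Φ x)
    (hhom : ∀ (t : ℝ), 0 ≤ t → ∀ x, Φ (t • x) = t * Φ x)
    (hzero : ∀ x, Φ x = 0 ↔ x = 0)
    (S : Set (EuclideanSpace ℝ (Fin n))) (hsub : S ⊆ sphereSet Φ)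
    (hha : (0 : EuclideanSpace ℝ (Fin n)) ∉ convexHull ℝ S) :
    SConvex Φ (rho Φ '' (convexHull ℝ S)) ∧
      rho Φ '' (convexHull ℝ S) =
        ⋂₀ {C : Set (EuclideanSpace ℝ (Fin n)) | C ⊆ sphereSet Φ ∧ SConvex Φ C ∧ S ⊆ C} := by
  have hpos : ∀ x ∈ convexHull ℝ S, 0 < Φ x := fun x hx =>
    (hnn x).lt_of_ne fun h => hha ((hzero x).1 h.symm ▸ hx)
  have hsc := sConvex_image_rho hhom (convex_convexHull ℝ S) hpos
  refine ⟨hsc, Subset.antisymm ?_ (sInter_subset_of_mem ⟨?_, hsc, ?_⟩)⟩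
  · exact subset_sInter fun C ⟨_, hC, hSC⟩ => image_rho_convexHull_subset hhom hsub hpos hC hSC
  · rintro _ ⟨x, hx, rfl⟩
    exact rho.mem_sphereSet hhom (hpos x hx)
  · exact fun s hs => ⟨s, subset_convexHull ℝ S hs, rho.apply_of_eq_one (hsub hs)⟩

theorem stmt12 {n : ℕ} (hn : 2 ≤ n) (Φ : EuclideanSpace ℝ (Fin n) → ℝ)
    (hc : Continuous Φ) (hnn : ∀ x, 0 ≤ Φ x)
    (hhom : ∀ (t : ℝ), 0 ≤ t → ∀ x, Φ (t • x) = t * Φ x)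
    (hzero : ∀ x, Φ x = 0 ↔ x = 0)
    (S : Set (EuclideanSpace ℝ (Fin n))) (hne : S.Nonempty) (hsub : S ⊆ sphereSet Φ)
    (hha : (0 : EuclideanSpace ℝ (Fin n)) ∉ convexHull ℝ S) :
    SConvex Φ (rho Φ '' (convexHull ℝ S)) ∧
      rho Φ '' (convexHull ℝ S) =
        ⋂₀ {C : Set (EuclideanSpace ℝ (Fin n)) | C ⊆ sphereSet Φ ∧ SConvex Φ C ∧ S ⊆ C} :=
  stmt12_general Φ hnn hhom hzero S hsub hha
end

section
/- (Helly-type theorem for pointed cones) Let K₁,…,K_m ⊆ ℝⁿ (m ≥ n) be nontrivial pointed convex cones. If ⋂_{j∈J} K_j ≠ {0} for every J ⊆ {1,…,m} with |J| = n, and ⋃_{j∈J} K_j ≠ ℝⁿ for every J ⊆ {1,…,m} with |J| = n+1, then ⋂_{i=1}^m K_i ≠ {0} and ⋃_{i=1}^m K_i ≠ ℝⁿ. -/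
open Set
open scoped RealInnerProductSpace

/-!
Replacing two of the cones by their intersection preserves both hypotheses (the intersection
hypothesis for the new family is the case of `n + 1` cones), so by induction on the number of
cones it suffices to treat `n + 1` cones.

For `n + 1` cones choose `x i ≠ 0` in every cone except `K i`. These vectors satisfy a relation
`∑ g i • x i = 0`, `g ≠ 0`. If `g` takes both a value `≤ 0` and a value `≥ 0`, then
`z = ∑ (g i)⁺ • x i = ∑ (g i)⁻ • x i`; for each `j` one of the two sums omits `x j`, so `z ∈ K j`,
and pointedness gives `z ≠ 0`. Otherwise we may take `g` strictly positive; then every vector of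
the span of the `x i` is, after subtracting a multiple of `g`, a nonnegative combination omitting
some `x j`, hence lies in `K j`. A point outside all cones thus shows that the span is a proper
subspace, and the `n` vectors `x i`, `i ≠ j₀`, have a relation vanishing at `j₀`, which is of the
first kind.
Finally `-z` lies in no cone, by pointedness again.
-/

open Finset Module Submodule

section LinearAlgebra

variable {𝕜 E ι : Type*} [Field 𝕜] [AddCommGroup E] [Module 𝕜 E] [Fintype ι] {x : ι → E}

lemma exists_sum_smul_eq_zero_of_finrank_span_lt (j₀ : ι)
    (h : finrank 𝕜 (span 𝕜 (Set.range x)) + 1 < Fintype.card ι) :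
    ∃ g : ι → 𝕜, ∑ i, g i • x i = 0 ∧ g j₀ = 0 ∧ ∃ i, g i ≠ 0 := by
  classical
  obtain ⟨g, hg, ⟨i, hi⟩⟩ : ∃ g : {i // i ≠ j₀} → 𝕜, ∑ i, g i • x i = 0 ∧ ∃ i, g i ≠ 0 := by
    refine Fintype.not_linearIndependent_iff.1 fun hli => ?_
    have := Module.Finite.span_of_finite 𝕜 (Set.finite_range x)
    have hle : Fintype.card {i // i ≠ j₀} ≤ finrank 𝕜 (span 𝕜 (Set.range x)) :=
      (finrank_span_eq_card hli).symm.trans_le <| Submodule.finrank_mono <|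
        span_mono (range_comp_subset_range (Subtype.val : {i // i ≠ j₀} → ι) x)
    rw [Fintype.card_subtype_compl, Fintype.card_subtype_eq] at hle
    omega
  refine ⟨fun i => if h : i = j₀ then 0 else g ⟨i, h⟩, ?_, dif_pos rfl, i, ?_⟩
  · rw [Fintype.sum_eq_add_sum_subtype_ne _ j₀]
    beta_reduce
    rw [dif_pos rfl, zero_smul, zero_add, ← hg]
    exact sum_congr rfl fun i _ => by rw [dif_neg i.2]
  · simpa [i.2] using hi

variable [LinearOrder 𝕜] [IsStrictOrderedRing 𝕜]

lemma exists_nonneg_sum_smul_eq_of_mem_span [Nonempty ι] {β : ι → 𝕜} (hβ : ∀ i, 0 < β i)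
    (hβx : ∑ i, β i • x i = 0) {v : E} (hv : v ∈ span 𝕜 (Set.range x)) :
    ∃ ν : ι → 𝕜, (∀ i, 0 ≤ ν i) ∧ (∃ j, ν j = 0) ∧ ∑ i, ν i • x i = v := by
  obtain ⟨c, rfl⟩ := (mem_span_range_iff_exists_fun 𝕜).1 hv
  obtain ⟨j, hj⟩ := Finite.exists_max fun i => -c i / β i
  refine ⟨fun i => c i + (-c j / β j) * β i, fun i => ?_, ⟨j, ?_⟩, ?_⟩
  · have := hj i
    rw [div_le_iff₀ (hβ i)] at this
    linarith
  · field_simp [(hβ j).ne']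
    ring
  · simp only [add_smul, mul_smul, sum_add_distrib, ← smul_sum, hβx, smul_zero, add_zero]

end LinearAlgebra

namespace PointedCone

variable {𝕜 E ι : Type*} [Field 𝕜] [LinearOrder 𝕜] [IsStrictOrderedRing 𝕜]
  [AddCommGroup E] [Module 𝕜 E]

def ofConvex {s : Set E} (hs : Convex 𝕜 s) (hsmul : ∀ c : 𝕜, 0 ≤ c → ∀ y ∈ s, c • y ∈ s)
    (h0 : 0 ∈ s) : PointedCone 𝕜 E where
  carrier := s
  add_mem' {x y} hx hy := by
    have hmid := hs hx hy (by norm_num : (0 : 𝕜) ≤ 1 / 2) (by norm_num) (add_halves 1)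
    convert hsmul 2 zero_le_two _ hmid using 1
    module
  zero_mem' := h0
  smul_mem' c y hy := hsmul c c.2 y hy

lemma sum_smul_mem (C : PointedCone 𝕜 E) {s : Finset ι} {μ : ι → 𝕜} {x : ι → E}
    (hμ : ∀ i ∈ s, 0 ≤ μ i) (hx : ∀ i ∈ s, μ i ≠ 0 → x i ∈ C) : ∑ i ∈ s, μ i • x i ∈ C :=
  C.sum_mem fun i hi => by
    by_cases h : μ i = 0
    · simp [h]
    · exact C.smul_mem (hμ i hi) (hx i hi h)

section Configuration

variable [Fintype ι] {C : ι → PointedCone 𝕜 E} {x : ι → E}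

lemma sum_smul_mem_of_eq_zero (hx : ∀ i j, i ≠ j → x i ∈ C j) {μ : ι → 𝕜}
    (hμ : ∀ i, 0 ≤ μ i) {j : ι} (hj : μ j = 0) : ∑ i, μ i • x i ∈ C j :=
  (C j).sum_smul_mem (fun i _ => hμ i) fun i _ hi => hx i j (by rintro rfl; exact hi hj)

lemma sum_smul_ne_zero (hx : ∀ i j, i ≠ j → x i ∈ C j) {β : ι → 𝕜} (hβ : ∀ i, 0 ≤ β i)
    {i₀ j : ι} (hi₀ : 0 < β i₀) (hj : β j = 0) (hCj : (C j : ConvexCone 𝕜 E).Salient)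
    (hxi₀ : x i₀ ≠ 0) : ∑ i, β i • x i ≠ 0 := by
  classical
  intro hsum
  have hij : i₀ ≠ j := by rintro rfl; exact hi₀.ne' hj
  have hrest : ∑ i ∈ univ.erase i₀, β i • x i ∈ C j :=
    (C j).sum_smul_mem (fun i _ => hβ i) fun i _ hi => hx i j (by rintro rfl; exact hi hj)
  rw [← add_sum_erase _ _ (mem_univ i₀), add_eq_zero_iff_eq_neg'] at hsum
  exact hCj _ ((C j).smul_mem hi₀.le (hx i₀ j hij)) (smul_ne_zero hi₀.ne' hxi₀)
    (hsum ▸ hrest)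

lemma exists_ne_zero_forall_mem_of_pos_of_nonpos (hC : ∀ j, (C j : ConvexCone 𝕜 E).Salient)
    (hx0 : ∀ i, x i ≠ 0) (hx : ∀ i j, i ≠ j → x i ∈ C j) {g : ι → 𝕜}
    (hg : ∑ i, g i • x i = 0) {i₀ j₀ : ι} (hi₀ : 0 < g i₀) (hj₀ : g j₀ ≤ 0) :
    ∃ z, z ≠ 0 ∧ ∀ j, z ∈ C j := by
  have hpn : ∑ i, (g i)⁺ • x i = ∑ i, (g i)⁻ • x i := by
    rw [← sub_eq_zero, ← sum_sub_distrib]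
    simpa only [← sub_smul, posPart_sub_negPart] using hg
  refine ⟨_, sum_smul_ne_zero hx (fun i => posPart_nonneg _) (posPart_pos hi₀)
    (posPart_eq_zero.2 hj₀) (hC j₀) (hx0 i₀), fun j => ?_⟩
  rcases le_total (g j) 0 with h | h
  · exact sum_smul_mem_of_eq_zero hx (fun i => posPart_nonneg _) (posPart_eq_zero.2 h)
  · exact hpn ▸ sum_smul_mem_of_eq_zero hx (fun i => negPart_nonneg _) (negPart_eq_zero.2 h)

lemma exists_ne_zero_forall_mem_of_sum_smul_eq_zero
    (hC : ∀ j, (C j : ConvexCone 𝕜 E).Salient) (hx0 : ∀ i, x i ≠ 0)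
    (hx : ∀ i j, i ≠ j → x i ∈ C j) {g : ι → 𝕜} (hg : ∑ i, g i • x i = 0)
    (hne : ∃ i, g i ≠ 0) (hle : ∃ j, g j ≤ 0) (hge : ∃ j, 0 ≤ g j) :
    ∃ z, z ≠ 0 ∧ ∀ j, z ∈ C j := by
  obtain ⟨i, hi⟩ := hne
  rcases hi.lt_or_gt with hneg | hpos
  · obtain ⟨j, hj⟩ := hge
    refine exists_ne_zero_forall_mem_of_pos_of_nonpos hC hx0 hx (g := -g) ?_
      (neg_pos.2 hneg) (neg_nonpos.2 hj)
    simp [neg_smul, sum_neg_distrib, hg]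
  · obtain ⟨j, hj⟩ := hle
    exact exists_ne_zero_forall_mem_of_pos_of_nonpos hC hx0 hx hg hpos hj

theorem exists_ne_zero_forall_mem_of_card_eq_finrank_add_one [FiniteDimensional 𝕜 E]
    (hC : ∀ j, (C j : ConvexCone 𝕜 E).Salient)
    (hcard : Fintype.card ι = finrank 𝕜 E + 1) (hx0 : ∀ i, x i ≠ 0)
    (hx : ∀ i j, i ≠ j → x i ∈ C j) {p : E} (hp : ∀ j, p ∉ C j) :
    ∃ z, z ≠ 0 ∧ ∀ j, z ∈ C j := by
  have : Nonempty ι := Fintype.card_pos_iff.1 (by omega)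
  obtain ⟨g, hg, hne⟩ : ∃ g : ι → 𝕜, ∑ i, g i • x i = 0 ∧ ∃ i, g i ≠ 0 := by
    refine Fintype.not_linearIndependent_iff.1 fun hli => ?_
    have := hli.fintype_card_le_finrank
    omega
  by_cases hsign : (∃ j, g j ≤ 0) ∧ ∃ j, 0 ≤ g j
  · exact exists_ne_zero_forall_mem_of_sum_smul_eq_zero hC hx0 hx hg hne hsign.1 hsign.2
  obtain ⟨β, hβ, hβx⟩ : ∃ β : ι → 𝕜, (∀ i, 0 < β i) ∧ ∑ i, β i • x i = 0 := by
    rw [not_and_or, not_exists, not_exists] at hsign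
    rcases hsign with hpos | hneg
    · exact ⟨g, fun i => not_le.1 (hpos i), hg⟩
    · exact ⟨-g, fun i => neg_pos.2 (not_le.1 (hneg i)), by simp [hg]⟩
  have hpspan : p ∉ span 𝕜 (Set.range x) := fun hp' => by
    obtain ⟨ν, hν, ⟨j, hj⟩, rfl⟩ := exists_nonneg_sum_smul_eq_of_mem_span hβ hβx hp'
    exact hp j (sum_smul_mem_of_eq_zero hx hν hj)
  have hrank : finrank 𝕜 (span 𝕜 (Set.range x)) < finrank 𝕜 E :=
    Submodule.finrank_lt fun htop => hpspan (htop ▸ mem_top)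
  obtain ⟨g', hg', hj₀, hne'⟩ := exists_sum_smul_eq_zero_of_finrank_span_lt (𝕜 := 𝕜) (x := x)
    (Classical.arbitrary ι) (by omega)
  exact exists_ne_zero_forall_mem_of_sum_smul_eq_zero hC hx0 hx hg' hne' ⟨_, hj₀.le⟩ ⟨_, hj₀.ge⟩

end Configuration

theorem exists_ne_zero_forall_mem_of_finset_card_eq_finrank_add_one [FiniteDimensional 𝕜 E]
    {C : ι → PointedCone 𝕜 E} (hC : ∀ j, (C j : ConvexCone 𝕜 E).Salient) {s : Finset ι}
    (hs : s.card = finrank 𝕜 E + 1)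
    (hInt : ∀ J ⊆ s, J.card = finrank 𝕜 E → ∃ z, z ≠ 0 ∧ ∀ j ∈ J, z ∈ C j)
    (hUn : ∃ p, ∀ j ∈ s, p ∉ C j) :
    ∃ z, z ≠ 0 ∧ ∀ j ∈ s, z ∈ C j := by
  classical
  have hx : ∀ i : s, ∃ z, z ≠ 0 ∧ ∀ j : s, i ≠ j → z ∈ C j := fun i => by
    obtain ⟨z, hz0, hz⟩ := hInt (s.erase i) (erase_subset _ _) (by simp [card_erase_of_mem, hs])
    exact ⟨z, hz0, fun j hij => hz j (mem_erase.2 ⟨fun h => hij (Subtype.ext h).symm, j.2⟩)⟩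
  choose x hx0 hx using hx
  obtain ⟨p, hp⟩ := hUn
  obtain ⟨z, hz0, hz⟩ := exists_ne_zero_forall_mem_of_card_eq_finrank_add_one
    (C := fun j : s => C j) (fun j => hC j) (by simpa using hs) hx0 hx (fun j => hp j j.2)
  exact ⟨z, hz0, fun j hj => hz ⟨j, hj⟩⟩

theorem helly_theorem [FiniteDimensional 𝕜 E] {C : ι → PointedCone 𝕜 E}
    (hC : ∀ j, (C j : ConvexCone 𝕜 E).Salient) {s : Finset ι} (hs : finrank 𝕜 E ≤ s.card)
    (hInt : ∀ J ⊆ s, J.card = finrank 𝕜 E → ∃ z, z ≠ 0 ∧ ∀ j ∈ J, z ∈ C j)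
    (hUn : ∀ J ⊆ s, J.card = finrank 𝕜 E + 1 → ∃ p, ∀ j ∈ J, p ∉ C j) :
    ∃ z, z ≠ 0 ∧ ∀ j ∈ s, z ∈ C j := by
  classical
  induction s using Finset.induction_on generalizing C with
  | empty => exact hInt ∅ subset_rfl (by rw [Finset.card_empty] at hs ⊢; omega)
  | @insert a t ha ih =>
    rw [card_insert_of_notMem ha] at hs
    rcases lt_trichotomy t.card (finrank 𝕜 E) with hlt | heq | hgt
    · exact hInt _ subset_rfl (by rw [card_insert_of_notMem ha]; omega)
    · exact exists_ne_zero_forall_mem_of_finset_card_eq_finrank_add_one hC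
        (by rw [card_insert_of_notMem ha, heq]) hInt
        (hUn _ subset_rfl (by rw [card_insert_of_notMem ha, heq]))
    obtain ⟨b, hb⟩ := card_pos.1 (by omega : 0 < t.card)
    set C' := Function.update C b (C b ⊓ C a)
    have hC'le : C' ≤ C := update_le_self_iff.2 inf_le_left
    have hC'ge : (fun j => C j ⊓ C a) ≤ C' := le_update_iff.2 ⟨le_rfl, fun _ _ => inf_le_left⟩
    have hInt' : ∀ J ⊆ t, J.card = finrank 𝕜 E → ∃ z, z ≠ 0 ∧ ∀ j ∈ J, z ∈ C' j := by
      intro J hJ hJcard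
      have hcard : (insert a J).card = finrank 𝕜 E + 1 := by
        rw [card_insert_of_notMem fun h => ha (hJ h), hJcard]
      obtain ⟨z, hz0, hz⟩ := exists_ne_zero_forall_mem_of_finset_card_eq_finrank_add_one hC hcard
        (fun K hK => hInt K (hK.trans (insert_subset_insert _ hJ)))
        (hUn _ (insert_subset_insert _ hJ) hcard)
      exact ⟨z, hz0, fun j hj => hC'ge j ⟨hz j (mem_insert_of_mem hj), hz a (mem_insert_self _ _)⟩⟩
    have hUn' : ∀ J ⊆ t, J.card = finrank 𝕜 E + 1 → ∃ p, ∀ j ∈ J, p ∉ C' j := by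
      intro J hJ hJcard
      obtain ⟨p, hp⟩ := hUn J (hJ.trans (subset_insert _ _)) hJcard
      exact ⟨p, fun j hj h => hp j hj (hC'le j h)⟩
    obtain ⟨z, hz0, hz⟩ := ih (fun j => (hC j).anti (hC'le j)) hgt.le hInt' hUn'
    have hzb : z ∈ C b ⊓ C a := by simpa [C'] using hz b hb
    exact ⟨z, hz0, forall_mem_insert _ _ _ |>.2 ⟨hzb.2, fun j hj => hC'le j (hz j hj)⟩⟩

end PointedCone

theorem stmt18_general {n : ℕ} (m : ℕ) (hm : n ≤ m)
    (K : Fin m → Set (EuclideanSpace ℝ (Fin n)))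
    (hKconv : ∀ i, Convex ℝ (K i))
    (hKcone : ∀ i, ∀ c : ℝ, 0 ≤ c → ∀ y ∈ K i, c • y ∈ K i)
    (hK0 : ∀ i, (0 : EuclideanSpace ℝ (Fin n)) ∈ K i)
    (hKptd : ∀ i, K i ∩ (-(K i)) = {0})
    (hInt : ∀ J : Finset (Fin m), J.card = n → (⋂ j ∈ J, K j) ≠ {0})
    (hUn : ∀ J : Finset (Fin m), J.card = n + 1 → (⋃ j ∈ J, K j) ≠ Set.univ) :
    (⋂ i, K i) ≠ {0} ∧ (⋃ i, K i) ≠ Set.univ := by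
  let C : Fin m → PointedCone ℝ (EuclideanSpace ℝ (Fin n)) := fun i =>
    .ofConvex (hKconv i) (hKcone i) (hK0 i)
  have hC (i : Fin m) : (C i : ConvexCone ℝ (EuclideanSpace ℝ (Fin n))).Salient :=
    (PointedCone.salient_iff_inter_neg_eq_singleton _).2 (hKptd i)
  have hInt' (J : Finset (Fin m)) (hJ : J.card = finrank ℝ (EuclideanSpace ℝ (Fin n))) :
      ∃ z, z ≠ 0 ∧ ∀ j ∈ J, z ∈ C j := by
    have h0 : (0 : EuclideanSpace ℝ (Fin n)) ∈ ⋂ j ∈ J, K j := mem_iInter₂.2 fun j _ => hK0 j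
    obtain ⟨z, hz, hz0⟩ := not_subset.1 <|
      mt (Set.Nonempty.subset_singleton_iff ⟨0, h0⟩).1 (hInt J (by simpa using hJ))
    exact ⟨z, hz0, mem_iInter₂.1 hz⟩
  have hUn' (J : Finset (Fin m)) (hJ : J.card = finrank ℝ (EuclideanSpace ℝ (Fin n)) + 1) :
      ∃ p, ∀ j ∈ J, p ∉ C j := by
    obtain ⟨p, hp⟩ := (ne_univ_iff_exists_notMem _).1 (hUn J (by simpa using hJ))
    exact ⟨p, fun j hj hpj => hp (mem_iUnion₂.2 ⟨j, hj, hpj⟩)⟩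
  obtain ⟨z, hz0, hz⟩ := PointedCone.helly_theorem hC (s := univ)
    (by simpa using hm) (fun J _ => hInt' J) (fun J _ => hUn' J)
  refine ⟨fun h => hz0 ?_, fun h => ?_⟩
  · have hzK : z ∈ ⋂ i, K i := mem_iInter.2 fun i => hz i (mem_univ i)
    rwa [h] at hzK
  · obtain ⟨i, hi⟩ := mem_iUnion.1 (h ▸ mem_univ (-z))
    exact hC i z (hz i (mem_univ i)) hz0 hi

theorem stmt18 {n : ℕ} (hn : 2 ≤ n) (m : ℕ) (hm : n ≤ m)
    (K : Fin m → Set (EuclideanSpace ℝ (Fin n)))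
    (hKconv : ∀ i, Convex ℝ (K i))
    (hKcone : ∀ i, ∀ c : ℝ, 0 ≤ c → ∀ y ∈ K i, c • y ∈ K i)
    (hKnt : ∀ i, K i ≠ {0}) (hK0 : ∀ i, (0 : EuclideanSpace ℝ (Fin n)) ∈ K i)
    (hKptd : ∀ i, K i ∩ (-(K i)) = {0})
    (hInt : ∀ J : Finset (Fin m), J.card = n → (⋂ j ∈ J, K j) ≠ {0})
    (hUn : ∀ J : Finset (Fin m), J.card = n + 1 → (⋃ j ∈ J, K j) ≠ Set.univ) :
    (⋂ i, K i) ≠ {0} ∧ (⋃ i, K i) ≠ Set.univ :=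
  stmt18_general m hm K hKconv hKcone hK0 hKptd hInt hUn
end
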